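/- Assume condition (2.2) and the stability assumption (6.3) hold. Let g : [0,S] → ℝ be continuously differentiable and w = (g(s_{m+1}), g(S))^T ∈ ℝ². Then there exists ξ ∈ (s_{m+1}, S) such that for all 0 ≤ n ≤ N−1: (a) |ψ_n(Δt C) w|_∞ ≤ |g(S)| + 2S|g'(ξ)|, (b) |φ(Δt A)^n Y_1 w|_∞ ≤ 2K(|g(S)| + S|g'(ξ)|), and (c) |Y_n (I − θΔt C)^{−1} w|_∞ ≤ (K+1)(|g(S)| + 2S|g'(ξ)|). -/

import Mathlib

/-- Tridiagonal matrix with diagonal `α`, subdiagonal `β` and superdiagonal `γ`. -/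
def tridiag {m : ℕ} (α β γ : Fin m → ℝ) : Matrix (Fin m) (Fin m) ℝ :=
  Matrix.of fun i j =>
    if (i : ℕ) = j then α i
    else if (i : ℕ) = (j : ℕ) + 1 then β i
    else if (j : ℕ) = (i : ℕ) + 1 then γ i
    else 0

/-- The `(m+1)×2` matrix whose only nonzero entry is `g` in the bottom-left position. -/
def Bmat {m : ℕ} (g : ℝ) : Matrix (Fin (m + 1)) (Fin 2) ℝ :=
  Matrix.of fun i j => if i = Fin.last m ∧ j = 0 then g else 0

/-- The `2×2` matrix both of whose rows equal `(−rS/h, r·s_{m+1}/h)`. -/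
noncomputable def Cmat (r spen S h : ℝ) : Matrix (Fin 2) (Fin 2) ℝ :=
  Matrix.of fun _ j => if j = 0 then -(r * S) / h else r * spen / h

/-- The maximum norm of a real matrix: `‖X‖_∞ = max_i Σ_j |X i j|`. -/
noncomputable def matMaxNorm {ι κ : Type*} [Fintype ι] [Fintype κ]
    (X : Matrix ι κ ℝ) : ℝ :=
  ⨆ i, ∑ j, |X i j|

/-- The maximum norm of a real vector: `|v|_∞ = max_i |v i|`. -/
noncomputable def vecMaxNorm {ι : Type*} [Fintype ι] (v : ι → ℝ) : ℝ :=
  ⨆ i, |v i|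

/-- The logarithmic maximum norm `μ_∞[X] = max_i ( x_{ii} + Σ_{j≠i} |x_{ij}| )`. -/
noncomputable def logMaxNorm {ι : Type*} [Fintype ι] [DecidableEq ι]
    (X : Matrix ι ι ℝ) : ℝ :=
  ⨆ i, (X i i + ∑ j ∈ Finset.univ.erase i, |X i j|)

/-- `φ(Δt X) = (I − θΔt X)⁻¹ (I + (1−θ)Δt X)`. -/
noncomputable def phiM {ι : Type*} [Fintype ι] [DecidableEq ι] (θ dt : ℝ)
    (X : Matrix ι ι ℝ) : Matrix ι ι ℝ :=
  (1 - (θ * dt) • X)⁻¹ * (1 + ((1 - θ) * dt) • X)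

/-- `ψ_n(Δt X) = φ(Δt X)^n (I − θΔt X)⁻¹`. -/
noncomputable def psiM {ι : Type*} [Fintype ι] [DecidableEq ι] (θ dt : ℝ) (n : ℕ)
    (X : Matrix ι ι ℝ) : Matrix ι ι ℝ :=
  (phiM θ dt X) ^ n * (1 - (θ * dt) • X)⁻¹

/-!
By the mean value theorem `w = a (1,1)ᵀ + b (s_{m+1}, S)ᵀ` with `b = g'(ξ)`, `a = g(S) - S b`.
These are eigenvectors of `C` for the eigenvalues `-r` and `0`, so `ψ_n(Δt C)` acts on them by
scalars of modulus at most one (`|φ(z)| ≤ 1` for `z ≤ 0`, `θ ≥ 1/2`); this gives (a).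
`B` maps into the span of the last unit vector `e`, and (2.2) makes `I - θΔt A`, `-A` and
`-(rI + A)` row diagonally dominant, with the extra margin `|γ_m|` in the last row, so the discrete
maximum principle bounds their inverses on multiples of `e`; with stability this gives (b).
For (c), `φ(Δt A) - φ(-rΔt) I = Δt/(1+θrΔt) (I - θΔt A)⁻¹ (rI + A)` and
`φ(Δt A) - I = Δt (I - θΔt A)⁻¹ A` turn the sum defining `Y_n` into a telescoping one, equal to
`(φ(Δt A)^n - φ(-rΔt)^n I) q₁ + (φ(Δt A)^n - I) q₂` with `q₁, q₂` bounded by the maximum principle.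
-/

open Matrix Finset Topology

section MaxNorm

variable {ι κ : Type*} [Fintype ι] [Fintype κ]

theorem vecMaxNorm_le [Nonempty ι] {v : ι → ℝ} {c : ℝ} (h : ∀ i, |v i| ≤ c) :
    vecMaxNorm v ≤ c :=
  ciSup_le h

theorem sum_abs_le_matMaxNorm (X : Matrix ι κ ℝ) (i : ι) : ∑ j, |X i j| ≤ matMaxNorm X :=
  le_ciSup (f := fun i => ∑ j, |X i j|) (Finite.bddAbove_range _) i

theorem matMaxNorm_nonneg (X : Matrix ι κ ℝ) : 0 ≤ matMaxNorm X :=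
  Real.iSup_nonneg fun _ => sum_nonneg fun _ _ => abs_nonneg _

theorem abs_mulVec_le_of_matMaxNorm_le {X : Matrix ι κ ℝ} {v : κ → ℝ} {K c : ℝ}
    (hX : matMaxNorm X ≤ K) (hv : ∀ j, |v j| ≤ c) (hc : 0 ≤ c) (i : ι) :
    |(X *ᵥ v) i| ≤ K * c :=
  calc |(X *ᵥ v) i| ≤ ∑ j, |X i j| * |v j| := by
        simpa only [mulVec, dotProduct, abs_mul] using abs_sum_le_sum_abs (fun j => X i j * v j) _
    _ ≤ ∑ j, |X i j| * c := by gcongr with j; exact hv j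
    _ = (∑ j, |X i j|) * c := (sum_mul ..).symm
    _ ≤ K * c := by gcongr; exact (sum_abs_le_matMaxNorm X i).trans hX

end MaxNorm

def IsDiagDominantWith {ι : Type*} [Fintype ι] [DecidableEq ι] (M : Matrix ι ι ℝ)
    (δ : ι → ℝ) : Prop :=
  ∀ i, ∑ j ∈ univ.erase i, |M i j| + δ i ≤ M i i

namespace IsDiagDominantWith

variable {ι : Type*} [Fintype ι] [DecidableEq ι] {M : Matrix ι ι ℝ} {δ : ι → ℝ}

theorem of_logMaxNorm_le {X : Matrix ι ι ℝ} {r : ℝ} (h : logMaxNorm (r • 1 + X) ≤ 0) :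
    IsDiagDominantWith (-X) fun _ => r := by
  intro i
  have hi : (r • 1 + X) i i + ∑ j ∈ univ.erase i, |(r • 1 + X) i j| ≤ 0 :=
    (le_ciSup (f := fun i => (r • 1 + X) i i + ∑ j ∈ univ.erase i, |(r • 1 + X) i j|)
      (Finite.bddAbove_range _) i).trans h
  have hoff : ∑ j ∈ univ.erase i, |(r • 1 + X) i j| = ∑ j ∈ univ.erase i, |X i j| :=
    sum_congr rfl fun j hj => by simp [one_apply_ne (ne_of_mem_erase hj).symm]
  rw [hoff] at hi
  simp only [Matrix.add_apply, Matrix.smul_apply, one_apply_eq, smul_eq_mul, mul_one] at hi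
  simp only [Matrix.neg_apply, abs_neg]
  linarith

theorem add_smul_one (h : IsDiagDominantWith M δ) (c : ℝ) :
    IsDiagDominantWith (M + c • 1) fun i => δ i + c := by
  intro i
  have hoff : ∑ j ∈ univ.erase i, |(M + c • 1) i j| = ∑ j ∈ univ.erase i, |M i j| :=
    sum_congr rfl fun j hj => by simp [one_apply_ne (ne_of_mem_erase hj).symm]
  rw [hoff]
  simp only [Matrix.add_apply, Matrix.smul_apply, one_apply_eq, smul_eq_mul, mul_one]
  linarith [h i]

theorem smul (h : IsDiagDominantWith M δ) {t : ℝ} (ht : 0 ≤ t) :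
    IsDiagDominantWith (t • M) fun i => t * δ i := by
  intro i
  simp only [Matrix.smul_apply, smul_eq_mul, abs_mul, abs_of_nonneg ht, ← mul_sum, ← mul_add]
  exact mul_le_mul_of_nonneg_left (h i) ht

theorem abs_le_of_mulVec_eq (h : IsDiagDominantWith M δ) (hδ : ∀ i, 0 < δ i) {y z : ι → ℝ}
    (hyz : M *ᵥ y = z) {c : ℝ} (hz : ∀ i, |z i| ≤ δ i * c) (i : ι) : |y i| ≤ c := by
  obtain ⟨k, -, hk⟩ := exists_max_image univ (fun i => |y i|) ⟨i, mem_univ i⟩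
  suffices δ k * |y k| ≤ δ k * c from (hk i (mem_univ i)).trans (le_of_mul_le_mul_left this (hδ k))
  have hrow : M k k * y k = z k - ∑ j ∈ univ.erase k, M k j * y j := by
    rw [← hyz, mulVec, dotProduct, ← add_sum_erase _ _ (mem_univ k)]
    ring
  have hdiag : 0 ≤ M k k := by
    linarith [h k, hδ k, sum_nonneg fun j (_ : j ∈ univ.erase k) => abs_nonneg (M k j)]
  have hoff : |∑ j ∈ univ.erase k, M k j * y j| ≤ (∑ j ∈ univ.erase k, |M k j|) * |y k| :=
    calc |∑ j ∈ univ.erase k, M k j * y j| ≤ ∑ j ∈ univ.erase k, |M k j| * |y j| := by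
          simpa only [abs_mul] using abs_sum_le_sum_abs (fun j => M k j * y j) (univ.erase k)
      _ ≤ _ := by
          rw [sum_mul]
          exact sum_le_sum fun j _ => mul_le_mul_of_nonneg_left (hk j (mem_univ j)) (abs_nonneg _)
  have hMk : M k k * |y k| ≤ |z k| + (∑ j ∈ univ.erase k, |M k j|) * |y k| := by
    rw [← abs_of_nonneg hdiag, ← abs_mul, hrow]
    exact (abs_sub _ _).trans (add_le_add_right hoff _)
  nlinarith [h k, hz k, abs_nonneg (y k)]

theorem isUnit_det (h : IsDiagDominantWith M δ) (hδ : ∀ i, 0 < δ i) : IsUnit M.det := by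
  rw [isUnit_iff_ne_zero]
  intro hdet
  obtain ⟨v, hv, hMv⟩ := exists_mulVec_eq_zero_iff.2 hdet
  refine hv (funext fun i => abs_nonpos_iff.1 ?_)
  exact h.abs_le_of_mulVec_eq hδ hMv (fun i => by simp) i

/-- With vanishing margins, invertibility of `M` is needed: perturb to `M + ε • 1` and let
`ε → 0⁺`. -/
theorem abs_le_of_mulVec_eq_of_nonneg (h : IsDiagDominantWith M δ) (hδ : ∀ i, 0 ≤ δ i)
    (hM : IsUnit M.det) {y z : ι → ℝ} (hyz : M *ᵥ y = z) {c : ℝ} (hc : 0 ≤ c)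
    (hz : ∀ i, |z i| ≤ δ i * c) (i : ι) : |y i| ≤ c := by
  have hy : y = M⁻¹ *ᵥ z := by rw [← hyz, mulVec_mulVec, nonsing_inv_mul _ hM, one_mulVec]
  have hinv : ContinuousAt (fun ε : ℝ => (M + ε • 1)⁻¹) 0 := by
    refine ContinuousAt.comp (g := Inv.inv) ?_ (by fun_prop)
    simp only [zero_smul, add_zero]
    exact continuousAt_matrix_inv M (Ring.inverse_eq_inv' (G₀ := ℝ) ▸ continuousAt_inv₀ hM.ne_zero)
  have hlim : Filter.Tendsto (fun ε : ℝ => |((M + ε • 1)⁻¹ *ᵥ z) i|) (𝓝[>] 0) (𝓝 |y i|) := by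
    have hcont : Continuous fun X : Matrix ι ι ℝ => |(X *ᵥ z) i| := by fun_prop
    simpa [Function.comp_def, hy] using
      (hcont.continuousAt.comp hinv).tendsto.mono_left (nhdsWithin_le_nhds (s := Set.Ioi 0))
  refine le_of_tendsto hlim (eventually_nhdsWithin_of_forall fun ε (hε : 0 < ε) => ?_)
  have hε := h.add_smul_one ε
  have hpos : ∀ i, 0 < δ i + ε := fun i => by linarith [hδ i]
  refine hε.abs_le_of_mulVec_eq hpos ?_ (fun i => (hz i).trans (by nlinarith [hδ i])) i
  rw [mulVec_mulVec, mul_nonsing_inv _ (hε.isUnit_det hpos), one_mulVec]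

theorem one_sub_smul (h : IsDiagDominantWith (-A) δ) {t : ℝ} (ht : 0 ≤ t) :
    IsDiagDominantWith (1 - t • A) fun i => t * δ i + 1 := by
  have hM : t • -A + (1 : ℝ) • (1 : Matrix ι ι ℝ) = 1 - t • A := by
    rw [one_smul, smul_neg, neg_add_eq_sub]
  simpa only [hM] using (h.smul ht).add_smul_one 1

theorem neg_smul_one_add (h : IsDiagDominantWith (-A) δ) (c : ℝ) :
    IsDiagDominantWith (-(c • 1 + A)) fun i => δ i - c := by
  have hM : -A + (-c) • (1 : Matrix ι ι ℝ) = -(c • 1 + A) := by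
    rw [neg_smul, neg_add, add_comm]
  simpa only [hM, sub_eq_add_neg] using h.add_smul_one (-c)

theorem isUnit_det_of_neg (h : IsDiagDominantWith (-A) δ) (hδ : ∀ i, 0 < δ i) :
    IsUnit A.det := by
  simpa [det_neg] using h.isUnit_det hδ

end IsDiagDominantWith

theorem abs_single_le {ι : Type*} [DecidableEq ι] {i0 : ι} {δ : ι → ℝ} {κ c : ℝ}
    (h0 : ∀ i, 0 ≤ δ i * c) (h1 : |κ| ≤ δ i0 * c) (i : ι) :
    |(Pi.single i0 κ : ι → ℝ) i| ≤ δ i * c := by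
  by_cases hi : i = i0
  · subst hi
    simpa using h1
  · simpa [hi] using h0 i

theorem le_update_const_add_abs {ι : Type*} [DecidableEq ι] (i0 : ι) (r γ : ℝ) (i : ι) :
    r ≤ Function.update (fun _ => r) i0 (r + |γ|) i := by
  by_cases hi : i = i0
  · subst hi
    simp
  · simp [hi]

section SingleSource

variable {ι : Type*} [Fintype ι] [DecidableEq ι] {i0 : ι} {A : Matrix ι ι ℝ} {r γ : ℝ}

theorem isUnit_det_one_sub_smul
    (hA : IsDiagDominantWith (-A) (Function.update (fun _ => r) i0 (r + |γ|))) (hr : 0 ≤ r)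
    {t : ℝ} (ht : 0 ≤ t) : IsUnit (1 - t • A).det :=
  (hA.one_sub_smul ht).isUnit_det fun i => by nlinarith [le_update_const_add_abs i0 r γ i]

theorem abs_inv_one_sub_smul_mulVec_single_le
    (hA : IsDiagDominantWith (-A) (Function.update (fun _ => r) i0 (r + |γ|))) (hr : 0 ≤ r)
    {θ dt : ℝ} (hθ : 1 / 2 ≤ θ) (hdt : 0 < dt) (κ : ℝ) (i : ι) :
    |((1 - (θ * dt) • A)⁻¹ *ᵥ Pi.single i0 (dt * γ * κ)) i| ≤ 2 * |κ| := by
  have ht : 0 ≤ θ * dt := by positivity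
  have hδ (i : ι) : 0 ≤ θ * dt * Function.update (fun _ => r) i0 (r + |γ|) i :=
    mul_nonneg ht (hr.trans (le_update_const_add_abs i0 r γ i))
  refine (hA.one_sub_smul ht).abs_le_of_mulVec_eq (fun i => by linarith [hδ i])
    (z := Pi.single i0 (dt * γ * κ)) ?_ (abs_single_le (i0 := i0) ?_ ?_) i
  · rw [mulVec_mulVec, mul_nonsing_inv _ (isUnit_det_one_sub_smul hA hr ht), one_mulVec]
  · exact fun i => mul_nonneg (by linarith [hδ i]) (by positivity)
  · rw [Function.update_self, abs_mul, abs_mul, abs_of_pos hdt]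
    have hX : 0 ≤ dt * |γ| * |κ| := by positivity
    nlinarith [mul_le_mul_of_nonneg_right hθ hX, mul_nonneg (mul_nonneg hr ht) (abs_nonneg κ),
      abs_nonneg κ]

theorem abs_inv_mulVec_single_le
    (hA : IsDiagDominantWith (-A) (Function.update (fun _ => r) i0 (r + |γ|))) (hr : 0 < r)
    (κ : ℝ) (i : ι) : |(A⁻¹ *ᵥ Pi.single i0 (γ * κ)) i| ≤ |κ| := by
  have hδ (i : ι) : 0 < Function.update (fun _ => r) i0 (r + |γ|) i :=
    hr.trans_le (le_update_const_add_abs i0 r γ i)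
  refine hA.abs_le_of_mulVec_eq hδ (z := Pi.single i0 (-(γ * κ))) ?_
    (abs_single_le (i0 := i0) (fun i => mul_nonneg (hδ i).le (abs_nonneg κ)) ?_) i
  · rw [neg_mulVec, mulVec_mulVec, mul_nonsing_inv _ (hA.isUnit_det_of_neg hδ), one_mulVec,
    Pi.single_neg]
  · rw [Function.update_self, abs_neg, abs_mul]
    nlinarith [mul_nonneg hr.le (abs_nonneg κ)]

theorem abs_inv_smul_one_add_mulVec_single_le
    (hA : IsDiagDominantWith (-A) (Function.update (fun _ => r) i0 (r + |γ|)))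
    (hinv : IsUnit (r • 1 + A).det) (κ : ℝ) (i : ι) :
    |((r • 1 + A)⁻¹ *ᵥ Pi.single i0 (γ * κ)) i| ≤ |κ| := by
  have hδ (i : ι) : 0 ≤ Function.update (fun _ => r) i0 (r + |γ|) i - r :=
    sub_nonneg.2 (le_update_const_add_abs i0 r γ i)
  have hdet : IsUnit (-(r • 1 + A)).det :=
    (isUnit_iff_isUnit_det _).1 ((isUnit_iff_isUnit_det _).2 hinv).neg
  refine (hA.neg_smul_one_add r).abs_le_of_mulVec_eq_of_nonneg hδ hdet
    (z := Pi.single i0 (-(γ * κ))) ?_ (abs_nonneg κ)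
    (abs_single_le (i0 := i0) (fun i => mul_nonneg (hδ i) (abs_nonneg κ)) ?_) i
  · rw [neg_mulVec, mulVec_mulVec, mul_nonsing_inv _ hinv, one_mulVec, Pi.single_neg]
  · rw [Function.update_self, abs_neg, abs_mul, add_sub_cancel_left]

end SingleSource

section ThetaMethod

variable {ι : Type*} [Fintype ι] [DecidableEq ι] {θ dt : ℝ} {X : Matrix ι ι ℝ}

noncomputable def phiR (θ z : ℝ) : ℝ := (1 + (1 - θ) * z) / (1 - θ * z)

theorem abs_phiR_le_one (hθ : 1 / 2 ≤ θ) {z : ℝ} (hz : z ≤ 0) : |phiR θ z| ≤ 1 := by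
  have hden : 0 < 1 - θ * z := by nlinarith
  rw [phiR, abs_div, abs_of_pos hden, div_le_one hden, abs_le]
  constructor <;> nlinarith

theorem inv_one_sub_smul_mulVec_of_mulVec_eq_smul (hM : IsUnit (1 - (θ * dt) • X).det)
    {x : ι → ℝ} {μ : ℝ} (hμ : 1 - θ * dt * μ ≠ 0) (hx : X *ᵥ x = μ • x) :
    (1 - (θ * dt) • X)⁻¹ *ᵥ x = (1 - θ * dt * μ)⁻¹ • x := by
  have hMx : (1 - (θ * dt) • X) *ᵥ x = (1 - θ * dt * μ) • x := by
    rw [sub_mulVec, one_mulVec, smul_mulVec, hx, smul_smul, sub_smul, one_smul]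
  rw [eq_inv_smul_iff₀ hμ, ← mulVec_smul, ← hMx, mulVec_mulVec, nonsing_inv_mul _ hM,
    one_mulVec]

theorem phiM_mulVec_of_mulVec_eq_smul (hM : IsUnit (1 - (θ * dt) • X).det)
    {x : ι → ℝ} {μ : ℝ} (hμ : 1 - θ * dt * μ ≠ 0) (hx : X *ᵥ x = μ • x) :
    phiM θ dt X *ᵥ x = phiR θ (dt * μ) • x := by
  have hNx : (1 + ((1 - θ) * dt) • X) *ᵥ x = (1 + (1 - θ) * (dt * μ)) • x := by
    rw [add_mulVec, one_mulVec, smul_mulVec, hx, smul_smul, add_smul, one_smul, mul_assoc]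
  rw [phiM, ← mulVec_mulVec, hNx, mulVec_smul,
    inv_one_sub_smul_mulVec_of_mulVec_eq_smul hM hμ hx, smul_smul, phiR, div_eq_mul_inv,
    mul_assoc]

theorem psiM_mulVec_of_mulVec_eq_smul (hM : IsUnit (1 - (θ * dt) • X).det)
    {x : ι → ℝ} {μ : ℝ} (hμ : 1 - θ * dt * μ ≠ 0) (hx : X *ᵥ x = μ • x) (n : ℕ) :
    psiM θ dt n X *ᵥ x = (phiR θ (dt * μ) ^ n / (1 - θ * dt * μ)) • x := by
  have hpow : ∀ k : ℕ, phiM θ dt X ^ k *ᵥ x = phiR θ (dt * μ) ^ k • x := by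
    intro k
    induction k with
    | zero => simp
    | succ k ih =>
      rw [pow_succ', ← mulVec_mulVec, ih, mulVec_smul, phiM_mulVec_of_mulVec_eq_smul hM hμ hx,
        smul_smul, pow_succ]
  rw [psiM, ← mulVec_mulVec, inv_one_sub_smul_mulVec_of_mulVec_eq_smul hM hμ hx, mulVec_smul,
    hpow, smul_smul, div_eq_mul_inv, mul_comm]

theorem phiM_sub_smul_one (hM : IsUnit (1 - (θ * dt) • X).det) (μ : ℝ) :
    phiM θ dt X - μ • 1 =
      (1 - (θ * dt) • X)⁻¹ * ((1 - μ) • 1 + ((1 - θ) * dt + μ * (θ * dt)) • X) := by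
  have hμ : μ • (1 : Matrix ι ι ℝ) = (1 - (θ * dt) • X)⁻¹ * (μ • (1 - (θ * dt) • X)) := by
    rw [Matrix.mul_smul, nonsing_inv_mul _ hM]
  rw [phiM, hμ, ← mul_sub]
  congr 1
  simp only [smul_sub, smul_smul, sub_smul, add_smul, one_smul]
  abel

theorem phiM_sub_one_mul_inv (hM : IsUnit (1 - (θ * dt) • X).det) (hX : IsUnit X.det) :
    (phiM θ dt X - 1) * X⁻¹ = dt • (1 - (θ * dt) • X)⁻¹ := by
  have h := phiM_sub_smul_one hM 1
  rw [one_smul, sub_self, zero_smul, zero_add, one_mul,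
    show (1 - θ) * dt + θ * dt = dt by ring] at h
  rw [h, mul_assoc, Matrix.smul_mul, mul_nonsing_inv _ hX, Matrix.mul_smul, mul_one]

theorem phiM_sub_phiR_smul_one_mul_inv (hM : IsUnit (1 - (θ * dt) • X).det) {r : ℝ}
    (hX : IsUnit (r • 1 + X).det) (hc : 1 + θ * dt * r ≠ 0) :
    (phiM θ dt X - phiR θ (-(dt * r)) • 1) * (r • 1 + X)⁻¹ =
      (dt / (1 + θ * dt * r)) • (1 - (θ * dt) • X)⁻¹ := by
  have hcoef : (1 - phiR θ (-(dt * r))) • (1 : Matrix ι ι ℝ) +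
      ((1 - θ) * dt + phiR θ (-(dt * r)) * (θ * dt)) • X =
        (dt / (1 + θ * dt * r)) • (r • 1 + X) := by
    have h1 : 1 - phiR θ (-(dt * r)) = dt / (1 + θ * dt * r) * r := by
      rw [phiR, show 1 - θ * -(dt * r) = 1 + θ * dt * r by ring]; field_simp; ring
    have h2 : (1 - θ) * dt + phiR θ (-(dt * r)) * (θ * dt) = dt / (1 + θ * dt * r) := by
      rw [phiR, show 1 - θ * -(dt * r) = 1 + θ * dt * r by ring]; field_simp; ring
    rw [h1, h2, smul_add, smul_smul]
  rw [phiM_sub_smul_one hM, hcoef, Matrix.mul_smul, Matrix.smul_mul, Matrix.mul_assoc,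
    mul_nonsing_inv _ hX, Matrix.mul_one]

end ThetaMethod

theorem sum_smul_pow_mul_sub_smul_one {R : Type*} [Ring R] [Algebra ℝ R] (F : R) (μ : ℝ)
    (n : ℕ) :
    ∑ j ∈ range n, μ ^ j • (F ^ (n - j - 1) * (F - μ • 1)) = F ^ n - μ ^ n • 1 := by
  set y := algebraMap ℝ R μ
  have hc : Commute F y := (Algebra.commutes μ F).symm
  have hsmul : ∀ (k : ℕ) (x : R), μ ^ k • x = y ^ k * x := fun k x => by
    rw [Algebra.smul_def, map_pow]
  calc ∑ j ∈ range n, μ ^ j • (F ^ (n - j - 1) * (F - μ • 1))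
      = (∑ j ∈ range n, y ^ j * F ^ (n - 1 - j)) * (F - y) := by
        rw [sum_mul]
        refine sum_congr rfl fun j _ => ?_
        rw [show μ • (1 : R) = y by rw [Algebra.smul_def, mul_one], hsmul, Nat.sub_right_comm,
          mul_assoc]
    _ = F ^ n - μ ^ n • 1 := by rw [← hc.geom_sum₂_comm, hc.geom_sum₂_mul, hsmul, mul_one]

theorem sum_pow_mul_mul_pow_mulVec {ι κ : Type*} [Fintype ι] [DecidableEq ι] [Fintype κ]
    [DecidableEq κ] (F : Matrix ι ι ℝ) (Y : Matrix ι κ ℝ) (G : Matrix κ κ ℝ) (x : κ → ℝ) (μ : ℝ)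
    (q₁ q₂ : ι → ℝ) (h : ∀ j, Y *ᵥ (G ^ j *ᵥ x) = μ ^ j • ((F - μ • 1) *ᵥ q₁) + (F - 1) *ᵥ q₂)
    (n : ℕ) :
    (∑ j ∈ range n, F ^ (n - j - 1) * Y * G ^ j) *ᵥ x =
      (F ^ n - μ ^ n • 1) *ᵥ q₁ + (F ^ n - 1) *ᵥ q₂ := by
  have h₂ := sum_smul_pow_mul_sub_smul_one F 1 n
  simp only [one_pow, one_smul] at h₂
  rw [← sum_smul_pow_mul_sub_smul_one F μ n, ← h₂, sum_mulVec, sum_mulVec, sum_mulVec,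
    ← sum_add_distrib]
  refine sum_congr rfl fun j _ => ?_
  rw [← mulVec_mulVec, ← mulVec_mulVec, h, mulVec_add, mulVec_smul, smul_mulVec, mulVec_mulVec,
    mulVec_mulVec]

theorem abs_pow_sub_smul_one_mulVec_le {ι : Type*} [Fintype ι] [DecidableEq ι]
    {F : Matrix ι ι ℝ} {n : ℕ} {K μ c : ℝ} (hK : matMaxNorm (F ^ n) ≤ K) (hμ : |μ| ≤ 1)
    {q : ι → ℝ} (hq : ∀ j, |q j| ≤ c) (hc : 0 ≤ c) (i : ι) :
    |((F ^ n - μ ^ n • 1) *ᵥ q) i| ≤ (K + 1) * c := by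
  have hF := abs_mulVec_le_of_matMaxNorm_le hK hq hc i
  have hμq : |μ ^ n * q i| ≤ c := by
    rw [abs_mul, abs_pow]
    exact (mul_le_of_le_one_left (abs_nonneg _) (pow_le_one₀ (abs_nonneg μ) hμ)).trans (hq i)
  rw [sub_mulVec, smul_mulVec, one_mulVec, Pi.sub_apply, Pi.smul_apply, smul_eq_mul]
  linarith [abs_sub ((F ^ n *ᵥ q) i) (μ ^ n * q i)]

section Scheme

variable {ι κ : Type*} [Fintype ι] [DecidableEq ι] [Fintype κ] [DecidableEq κ]

noncomputable def Y1M (θ dt : ℝ) (A : Matrix ι ι ℝ) (B : Matrix ι κ ℝ) (C : Matrix κ κ ℝ) :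
    Matrix ι κ ℝ :=
  (1 - (θ * dt) • A)⁻¹ * (dt • B) * (1 - (θ * dt) • C)⁻¹

noncomputable def YM (θ dt : ℝ) (A : Matrix ι ι ℝ) (B : Matrix ι κ ℝ) (C : Matrix κ κ ℝ)
    (n : ℕ) : Matrix ι κ ℝ :=
  ∑ j ∈ range n, phiM θ dt A ^ (n - j - 1) * Y1M θ dt A B C * phiM θ dt C ^ j

end Scheme

section Cmat

variable {r s S : ℝ}

theorem Cmat_mulVec_one_one (h : S - s ≠ 0) : Cmat r s S (S - s) *ᵥ ![1, 1] = (-r) • ![1, 1] := by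
  ext i
  fin_cases i <;>
  · simp [Cmat, mulVec, dotProduct, Fin.sum_univ_two]
    field_simp
    ring

theorem Cmat_mulVec_nodes (h : ℝ) : Cmat r s S h *ᵥ ![s, S] = 0 := by
  ext i
  fin_cases i <;>
  · simp [Cmat, mulVec, dotProduct, Fin.sum_univ_two]
    ring

theorem det_one_sub_smul_Cmat (h : S - s ≠ 0) (t : ℝ) :
    (1 - t • Cmat r s S (S - s)).det = 1 + t * r := by
  simp [det_fin_two, Cmat]
  field_simp
  ring

theorem psiM_Cmat_mulVec (h : S - s ≠ 0) {θ dt : ℝ} (hc : 1 + θ * dt * r ≠ 0) (x y : ℝ) (n : ℕ) :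
    psiM θ dt n (Cmat r s S (S - s)) *ᵥ (x • ![1, 1] + y • ![s, S]) =
      (x * phiR θ (-(dt * r)) ^ n / (1 + θ * dt * r)) • ![1, 1] + y • ![s, S] := by
  have hM : IsUnit (1 - (θ * dt) • Cmat r s S (S - s)).det := by
    rwa [det_one_sub_smul_Cmat h, isUnit_iff_ne_zero]
  have hu := psiM_mulVec_of_mulVec_eq_smul hM (μ := -r) (by rwa [mul_neg, sub_neg_eq_add])
    (Cmat_mulVec_one_one h) n
  have hv := psiM_mulVec_of_mulVec_eq_smul hM (μ := 0) (by simp)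
    ((Cmat_mulVec_nodes _).trans (zero_smul ℝ _).symm) n
  have hφ0 : phiR θ 0 = 1 := by simp [phiR]
  rw [mulVec_add, mulVec_smul, mulVec_smul, hu, hv, smul_smul, smul_smul]
  simp only [mul_neg, mul_zero, sub_zero, sub_neg_eq_add, hφ0, one_pow, div_one, mul_one,
    mul_div_assoc]

theorem vecCons_eq_smul_add_smul (b q : ℝ) :
    ![q - b * (S - s), q] = (q - b * S) • ![1, 1] + b • ![s, S] := by
  ext i
  fin_cases i <;> simp; ring

end Cmat

theorem Bmat_mulVec {m : ℕ} (γ : ℝ) (x : Fin 2 → ℝ) :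
    Bmat γ *ᵥ x = Pi.single (Fin.last m) (γ * x 0) := by
  ext i
  by_cases hi : i = Fin.last m <;> simp [Bmat, mulVec, dotProduct, hi]

theorem sum_erase_abs_tridiag_last_le {m : ℕ} (α β γ : Fin (m + 1) → ℝ) :
    ∑ j ∈ univ.erase (Fin.last m), |tridiag α β γ (Fin.last m) j| ≤ |β (Fin.last m)| := by
  have hrow : ∀ j ∈ univ.erase (Fin.last m),
      |tridiag α β γ (Fin.last m) j| = if (j : ℕ) + 1 = m then |β (Fin.last m)| else 0 := by
    intro j hj
    have hj : (j : ℕ) < m := Fin.val_lt_last (ne_of_mem_erase hj)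
    simp only [tridiag, of_apply, Fin.val_last]
    split_ifs <;> first | omega | simp
  rw [sum_congr rfl hrow, ← sum_filter, sum_const, nsmul_eq_mul]
  refine mul_le_of_le_one_left (abs_nonneg _) ?_
  exact_mod_cast card_le_one.2 fun j hj k hk => Fin.ext (by simp at hj hk; omega)

theorem isDiagDominantWith_neg_tridiag {m : ℕ} {r : ℝ} {α β γ : Fin (m + 1) → ℝ}
    (hmu : logMaxNorm (r • 1 + tridiag α β γ) ≤ 0)
    (hrow : r + α (Fin.last m) + |β (Fin.last m)| + |γ (Fin.last m)| ≤ 0) :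
    IsDiagDominantWith (-tridiag α β γ)
      (Function.update (fun _ => r) (Fin.last m) (r + |γ (Fin.last m)|)) := by
  intro i
  by_cases hi : i = Fin.last m
  · subst hi
    have hsum := sum_erase_abs_tridiag_last_le α β γ
    simp only [Matrix.neg_apply, abs_neg, Function.update_self]
    simp only [tridiag, of_apply, if_true] at hsum ⊢
    linarith
  · simpa [hi] using IsDiagDominantWith.of_logMaxNorm_le hmu i

theorem abs_mul_pow_div_le {a φ c : ℝ} (hφ : |φ| ≤ 1) (hc : 0 ≤ c) (n : ℕ) :
    |a * φ ^ n / (1 + c)| ≤ |a| := by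
  have hc1 : (0 : ℝ) < 1 + c := by linarith
  rw [abs_div, abs_mul, abs_pow, abs_of_pos hc1, div_le_iff₀ hc1]
  nlinarith [pow_le_one₀ (n := n) (abs_nonneg φ) hφ, abs_nonneg a]

theorem abs_div_add_mul_le {q b s S c : ℝ} (hc : 0 ≤ c) (hs : 0 ≤ s) (hsS : s ≤ S) :
    |(q - b * S) / (1 + c) + b * s| ≤ |q| + S * |b| := by
  have hform : (q - b * S) / (1 + c) + b * s = (q - b * (S - s) + b * s * c) / (1 + c) := by
    field_simp
    ring
  have hnum : |q - b * (S - s) + b * s * c| ≤ |q| + |b| * (S - s) + |b| * s * c := by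
    calc _ ≤ |q| + |b * (S - s)| + |b * s * c| :=
          (abs_add_le _ _).trans (by gcongr; exact abs_sub _ _)
      _ = _ := by rw [abs_mul, abs_mul, abs_mul, abs_of_nonneg (sub_nonneg.2 hsS),
        abs_of_nonneg hs, abs_of_nonneg hc]
  have hc1 : (0 : ℝ) < 1 + c := by linarith
  rw [hform, abs_div, abs_of_pos hc1, div_le_iff₀ hc1]
  nlinarith [mul_nonneg hc (abs_nonneg q), mul_nonneg hs (abs_nonneg b),
    mul_nonneg (mul_nonneg hc (abs_nonneg b)) (sub_nonneg.2 hsS)]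

theorem abs_sub_mul_le {q b S : ℝ} (hS : 0 ≤ S) : |q - b * S| ≤ |q| + S * |b| := by
  simpa only [abs_mul, abs_of_nonneg hS, mul_comm] using abs_sub q (b * S)

section BoundaryCoupling

variable {m : ℕ} {r s S θ dt γ K : ℝ} {A : Matrix (Fin (m + 1)) (Fin (m + 1)) ℝ}

theorem Y1M_mulVec (h : S - s ≠ 0) (hc : 1 + θ * dt * r ≠ 0) (x y : ℝ) :
    Y1M θ dt A (Bmat γ) (Cmat r s S (S - s)) *ᵥ (x • ![1, 1] + y • ![s, S]) =
      (1 - (θ * dt) • A)⁻¹ *ᵥ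
        Pi.single (Fin.last m) (dt * γ * (x / (1 + θ * dt * r) + y * s)) := by
  have hC := psiM_Cmat_mulVec h hc x y 0
  simp only [psiM, pow_zero, Matrix.one_mul, mul_one] at hC
  rw [Y1M, ← mulVec_mulVec, ← mulVec_mulVec, hC, smul_mulVec, Bmat_mulVec, ← Pi.single_smul']
  congr 2
  simp
  ring

theorem Y1M_mulVec_phiM_pow_mulVec (hMA : IsUnit (1 - (θ * dt) • A).det) (hA : IsUnit A.det)
    (hinv : IsUnit (r • 1 + A).det) (h : S - s ≠ 0) (hc : 0 < 1 + θ * dt * r) (b q : ℝ)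
    (j : ℕ) :
    Y1M θ dt A (Bmat γ) (Cmat r s S (S - s)) *ᵥ (phiM θ dt (Cmat r s S (S - s)) ^ j *ᵥ
      ((1 - (θ * dt) • Cmat r s S (S - s))⁻¹ *ᵥ ![q - b * (S - s), q])) =
        phiR θ (-(dt * r)) ^ j • ((phiM θ dt A - phiR θ (-(dt * r)) • 1) *ᵥ
          ((r • 1 + A)⁻¹ *ᵥ Pi.single (Fin.last m) (γ * ((q - b * S) / (1 + θ * dt * r))))) +
        (phiM θ dt A - 1) *ᵥ (A⁻¹ *ᵥ Pi.single (Fin.last m) (γ * (b * s))) := by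
  rw [mulVec_mulVec (M := phiM θ dt (Cmat r s S (S - s)) ^ j), ← psiM, vecCons_eq_smul_add_smul,
    psiM_Cmat_mulVec h hc.ne', Y1M_mulVec h hc.ne', mulVec_mulVec, mulVec_mulVec,
    phiM_sub_phiR_smul_one_mul_inv hMA hinv hc.ne', phiM_sub_one_mul_inv hMA hA,
    smul_mulVec, smul_mulVec, ← mulVec_smul, ← mulVec_smul, ← mulVec_smul, ← mulVec_add]
  congr 1
  ext i
  by_cases hi : i = Fin.last m
  · subst hi
    simp only [Pi.add_apply, Pi.smul_apply, Pi.single_eq_same, smul_eq_mul]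
    field_simp
  · simp [hi]

theorem vecMaxNorm_psiM_Cmat_mulVec_le (hr : 0 ≤ r) (hθ : 1 / 2 ≤ θ) (hdt : 0 ≤ dt)
    (hs : 0 ≤ s) (hsS : s < S) (b q : ℝ) (n : ℕ) :
    vecMaxNorm (psiM θ dt n (Cmat r s S (S - s)) *ᵥ ![q - b * (S - s), q]) ≤
      |q| + 2 * S * |b| := by
  have hc : 0 ≤ θ * dt * r := by positivity
  rw [vecCons_eq_smul_add_smul, psiM_Cmat_mulVec (sub_ne_zero.2 hsS.ne') (by positivity)]
  have ha := abs_mul_pow_div_le (a := q - b * S)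
    (abs_phiR_le_one hθ (neg_nonpos.2 (mul_nonneg hdt hr))) hc n
  have hqa := abs_sub_mul_le (q := q) (b := b) (hs.trans hsS.le)
  have hentry (t : ℝ) (ht : 0 ≤ t) (htS : t ≤ S) :
      |(q - b * S) * phiR θ (-(dt * r)) ^ n / (1 + θ * dt * r) + b * t| ≤ |q| + 2 * S * |b| := by
    have hbt : |b * t| ≤ S * |b| := by
      rw [abs_mul, abs_of_nonneg ht, mul_comm S]
      exact mul_le_mul_of_nonneg_left htS (abs_nonneg b)
    linarith [abs_add_le ((q - b * S) * phiR θ (-(dt * r)) ^ n / (1 + θ * dt * r)) (b * t)]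
  refine vecMaxNorm_le fun i => ?_
  fin_cases i
  · simpa using hentry s hs hsS.le
  · simpa using hentry S (hs.trans hsS.le) le_rfl

theorem vecMaxNorm_phiM_pow_mul_Y1M_mulVec_le
    (hA : IsDiagDominantWith (-A) (Function.update (fun _ => r) (Fin.last m) (r + |γ|)))
    (hr : 0 ≤ r) (hθ : 1 / 2 ≤ θ) (hdt : 0 < dt) (hs : 0 ≤ s) (hsS : s < S) {n : ℕ}
    (hK : matMaxNorm (phiM θ dt A ^ n) ≤ K) (b q : ℝ) :
    vecMaxNorm ((phiM θ dt A ^ n * Y1M θ dt A (Bmat γ) (Cmat r s S (S - s))) *ᵥ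
      ![q - b * (S - s), q]) ≤ 2 * K * (|q| + S * |b|) := by
  have hc : 0 ≤ θ * dt * r := by positivity
  rw [vecCons_eq_smul_add_smul, ← mulVec_mulVec, Y1M_mulVec (sub_ne_zero.2 hsS.ne') (by positivity)]
  refine vecMaxNorm_le fun i => ?_
  have hx := abs_div_add_mul_le (q := q) (b := b) hc hs hsS.le
  have hK0 : 0 ≤ K := (matMaxNorm_nonneg _).trans hK
  calc _ ≤ K * (2 * |(q - b * S) / (1 + θ * dt * r) + b * s|) :=
        abs_mulVec_le_of_matMaxNorm_le hK (abs_inv_one_sub_smul_mulVec_single_le hA hr hθ hdt _)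
          (by positivity) i
    _ ≤ 2 * K * (|q| + S * |b|) := by nlinarith

theorem vecMaxNorm_YM_mul_mulVec_le
    (hA : IsDiagDominantWith (-A) (Function.update (fun _ => r) (Fin.last m) (r + |γ|)))
    (hinv : IsUnit (r • 1 + A).det) (hr : 0 < r) (hθ : 1 / 2 ≤ θ) (hdt : 0 < dt) (hs : 0 ≤ s)
    (hsS : s < S) {n : ℕ} (hK : matMaxNorm (phiM θ dt A ^ n) ≤ K) (b q : ℝ) :
    vecMaxNorm ((YM θ dt A (Bmat γ) (Cmat r s S (S - s)) n *
      (1 - (θ * dt) • Cmat r s S (S - s))⁻¹) *ᵥ ![q - b * (S - s), q]) ≤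
        (K + 1) * (|q| + 2 * S * |b|) := by
  have hθdt : 0 ≤ θ * dt := by positivity
  have hc : 0 < 1 + θ * dt * r := by positivity
  have hMA : IsUnit (1 - (θ * dt) • A).det := isUnit_det_one_sub_smul hA hr.le hθdt
  have hAdet : IsUnit A.det :=
    hA.isUnit_det_of_neg fun i => hr.trans_le (le_update_const_add_abs (Fin.last m) r γ i)
  set φ := phiR θ (-(dt * r))
  set a := q - b * S
  set q₁ := (r • 1 + A)⁻¹ *ᵥ Pi.single (Fin.last m) (γ * (a / (1 + θ * dt * r)))
  set q₂ := A⁻¹ *ᵥ Pi.single (Fin.last m) (γ * (b * s))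
  have hstep := Y1M_mulVec_phiM_pow_mulVec (γ := γ) hMA hAdet hinv (sub_ne_zero.2 hsS.ne') hc b q
  rw [← mulVec_mulVec, YM, sum_pow_mul_mul_pow_mulVec _ _ _ _ φ q₁ q₂ hstep n]
  refine vecMaxNorm_le fun i => ?_
  have hφ : |φ| ≤ 1 := abs_phiR_le_one hθ (neg_nonpos.2 (mul_nonneg hdt.le hr.le))
  have h₁ := abs_pow_sub_smul_one_mulVec_le hK hφ
    (abs_inv_smul_one_add_mulVec_single_le hA hinv (a / (1 + θ * dt * r))) (abs_nonneg _) i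
  have h₂ := abs_pow_sub_smul_one_mulVec_le hK (abs_one.le) (μ := 1)
    (abs_inv_mulVec_single_le hA hr (b * s)) (abs_nonneg _) i
  simp only [one_pow, one_smul] at h₂
  have ha : |a / (1 + θ * dt * r)| ≤ |q| + S * |b| := by
    refine le_trans ?_ (abs_sub_mul_le (hs.trans hsS.le))
    rw [abs_div, abs_of_pos hc]
    exact div_le_self (abs_nonneg a) (by nlinarith)
  have hbs : |b * s| ≤ S * |b| := by
    rw [abs_mul, abs_of_nonneg hs, mul_comm S]
    exact mul_le_mul_of_nonneg_left hsS.le (abs_nonneg b)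
  have hK1 : 0 ≤ K + 1 := by linarith [(matMaxNorm_nonneg _).trans hK]
  rw [Pi.add_apply]
  calc _ ≤ (K + 1) * |a / (1 + θ * dt * r)| + (K + 1) * |b * s| :=
        (abs_add_le _ _).trans (add_le_add h₁ h₂)
    _ ≤ (K + 1) * (|q| + 2 * S * |b|) := by nlinarith

end BoundaryCoupling

theorem statement18_general (m : ℕ) (r spen S T : ℝ) (hr : 0 < r) (hT : 0 < T)
    (hspen : 0 < spen) (hsS : spen < S)
    (θ : ℝ) (hθ : θ ∈ Set.Icc (1/2 : ℝ) 1)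
    (N : ℕ) (hN : 1 ≤ N)
    (α β γ : Fin (m + 1) → ℝ)
    (A : Matrix (Fin (m + 1)) (Fin (m + 1)) ℝ) (hA : A = tridiag α β γ)
    (B : Matrix (Fin (m + 1)) (Fin 2) ℝ) (hB : B = Bmat (γ (Fin.last m)))
    (C : Matrix (Fin 2) (Fin 2) ℝ) (hC : C = Cmat r spen S (S - spen))
    (hinv : IsUnit (r • (1 : Matrix (Fin (m + 1)) (Fin (m + 1)) ℝ) + A).det)
    (hmu : logMaxNorm (r • (1 : Matrix (Fin (m + 1)) (Fin (m + 1)) ℝ) + A) ≤ 0)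
    (hrow : r + α (Fin.last m) + |β (Fin.last m)| + |γ (Fin.last m)| ≤ 0)
    (K : ℝ)
    (hK : ∀ N' : ℕ, 1 ≤ N' → ∀ n : ℕ, n ≤ N' →
      matMaxNorm ((phiM θ (T / N') A) ^ n) ≤ K)
    (g g' : ℝ → ℝ)
    (hg : ∀ x ∈ Set.Icc (0:ℝ) S, HasDerivAt g (g' x) x)
    (w : Fin 2 → ℝ) (hw : w = ![g spen, g S])
    (Y1 : Matrix (Fin (m + 1)) (Fin 2) ℝ)
    (hY1 : Y1 = (1 - (θ * (T / N)) • A)⁻¹ * ((T / N) • B) * (1 - (θ * (T / N)) • C)⁻¹)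
    (Y : ℕ → Matrix (Fin (m + 1)) (Fin 2) ℝ)
    (hY : ∀ n : ℕ, Y n = ∑ j ∈ Finset.range n,
      (phiM θ (T / N) A) ^ (n - j - 1) * Y1 * (phiM θ (T / N) C) ^ j) :
    ∃ ξ ∈ Set.Ioo spen S, ∀ n : ℕ, n ≤ N - 1 →
      (vecMaxNorm ((psiM θ (T / N) n C).mulVec w) ≤ |g S| + 2 * S * |g' ξ|) ∧
      (vecMaxNorm (((phiM θ (T / N) A) ^ n * Y1).mulVec w) ≤
        2 * K * (|g S| + S * |g' ξ|)) ∧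
      (vecMaxNorm ((Y n * (1 - (θ * (T / N)) • C)⁻¹).mulVec w) ≤
        (K + 1) * (|g S| + 2 * S * |g' ξ|)) := by
  have hdt : 0 < T / N := div_pos hT (by exact_mod_cast hN)
  obtain ⟨ξ, hξ, hslope⟩ := exists_hasDerivAt_eq_slope g g' hsS
    (fun x hx => (hg x ⟨hspen.le.trans hx.1, hx.2⟩).continuousAt.continuousWithinAt)
    (fun x hx => hg x ⟨(hspen.trans hx.1).le, hx.2.le⟩)
  have hgs : g spen = g S - g' ξ * (S - spen) := by
    rw [hslope, div_mul_cancel₀ _ (sub_ne_zero.2 hsS.ne')]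
    ring
  subst hA hB hC hY1 hw
  have hdom := isDiagDominantWith_neg_tridiag hmu hrow
  rw [hgs]
  refine ⟨ξ, hξ, fun n hn => ⟨?_, ?_, ?_⟩⟩
  · exact vecMaxNorm_psiM_Cmat_mulVec_le hr.le hθ.1 hdt.le hspen.le hsS _ _ n
  · exact vecMaxNorm_phiM_pow_mul_Y1M_mulVec_le hdom hr.le hθ.1 hdt hspen.le hsS
      (hK N hN n (by omega)) _ _
  · rw [hY n]
    exact vecMaxNorm_YM_mul_mulVec_le hdom hinv hr hθ.1 hdt hspen.le hsS (hK N hN n (by omega)) _ _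

/-- Assume condition (2.2) and the stability assumption (6.3) hold.  Let
`g : [0,S] → ℝ` be continuously differentiable and `w = (g(s_{m+1}), g(S))ᵀ`.  Then
there exists `ξ ∈ (s_{m+1}, S)` such that for all `0 ≤ n ≤ N−1`:
(a) `|ψ_n(Δt C) w|_∞ ≤ |g(S)| + 2S|g'(ξ)|`,
(b) `|φ(Δt A)^n Y_1 w|_∞ ≤ 2K(|g(S)| + S|g'(ξ)|)`,
(c) `|Y_n (I − θΔt C)⁻¹ w|_∞ ≤ (K+1)(|g(S)| + 2S|g'(ξ)|)`. -/
theorem statement18 (m : ℕ) (r spen S T : ℝ) (hr : 0 < r) (hT : 0 < T)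
    (hspen : 0 < spen) (hsS : spen < S)
    (θ : ℝ) (hθ : θ ∈ Set.Icc (1/2 : ℝ) 1)
    (N : ℕ) (hN : 1 ≤ N)
    (α β γ : Fin (m + 1) → ℝ) (hconv : m = 0 → β 0 = 0)
    (A : Matrix (Fin (m + 1)) (Fin (m + 1)) ℝ) (hA : A = tridiag α β γ)
    (B : Matrix (Fin (m + 1)) (Fin 2) ℝ) (hB : B = Bmat (γ (Fin.last m)))
    (C : Matrix (Fin 2) (Fin 2) ℝ) (hC : C = Cmat r spen S (S - spen))
    (hinv : IsUnit (r • (1 : Matrix (Fin (m + 1)) (Fin (m + 1)) ℝ) + A).det)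
    (hmu : logMaxNorm (r • (1 : Matrix (Fin (m + 1)) (Fin (m + 1)) ℝ) + A) ≤ 0)
    (hrow : r + α (Fin.last m) + |β (Fin.last m)| + |γ (Fin.last m)| ≤ 0)
    (K : ℝ)
    (hK : ∀ N' : ℕ, 1 ≤ N' → ∀ n : ℕ, n ≤ N' →
      matMaxNorm ((phiM θ (T / N') A) ^ n) ≤ K)
    (g g' : ℝ → ℝ)
    (hg : ∀ x ∈ Set.Icc (0:ℝ) S, HasDerivAt g (g' x) x)
    (hg' : ContinuousOn g' (Set.Icc (0:ℝ) S))
    (w : Fin 2 → ℝ) (hw : w = ![g spen, g S])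
    (Y1 : Matrix (Fin (m + 1)) (Fin 2) ℝ)
    (hY1 : Y1 = (1 - (θ * (T / N)) • A)⁻¹ * ((T / N) • B) * (1 - (θ * (T / N)) • C)⁻¹)
    (Y : ℕ → Matrix (Fin (m + 1)) (Fin 2) ℝ)
    (hY : ∀ n : ℕ, Y n = ∑ j ∈ Finset.range n,
      (phiM θ (T / N) A) ^ (n - j - 1) * Y1 * (phiM θ (T / N) C) ^ j) :
    ∃ ξ ∈ Set.Ioo spen S, ∀ n : ℕ, n ≤ N - 1 →
      (vecMaxNorm ((psiM θ (T / N) n C).mulVec w) ≤ |g S| + 2 * S * |g' ξ|) ∧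
      (vecMaxNorm (((phiM θ (T / N) A) ^ n * Y1).mulVec w) ≤
        2 * K * (|g S| + S * |g' ξ|)) ∧
      (vecMaxNorm ((Y n * (1 - (θ * (T / N)) • C)⁻¹).mulVec w) ≤
        (K + 1) * (|g S| + 2 * S * |g' ξ|)) :=
  statement18_general m r spen S T hr hT hspen hsS θ hθ N hN α β γ A hA B hB C hC hinv hmu hrow K hK
    g g' hg w hw Y1 hY1 Y hY
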